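/- Let X be a metric space, g an isometry of X, and x ∈ X such that n ↦ gⁿ(x) is a (K,C)-quasi-isometric embedding of ℤ into X. Let γ₀ : [0,1] → X be a constant-speed geodesic from x to g(x), i.e. γ₀(0) = x, γ₀(1) = g(x), and d(γ₀(s), γ₀(t)) = |s − t|·d(x, g(x)) for all s,t ∈ [0,1]. Define γ : ℝ → X by γ(t) = g^{⌊t⌋}(γ₀(t − ⌊t⌋)), where ⌊t⌋ is the greatest integer ≤ t. Then γ is continuous, satisfies g(γ(t)) = γ(t+1) for all t (so its image is invariant under g), and γ is a (K',C')-quasi-isometric embedding of ℝ into X for some K' ≥ 1 and C' ≥ 0. -/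

import Mathlib

/-!
On `[n, n + 1]` the path `γ` is the translate `gⁿ ∘ γ₀ (· - n)` of the segment, and consecutive
pieces agree at the integers because `γ₀ 1 = g (γ₀ 0)`; so `γ` is locally Lipschitz, hence
continuous. Every `γ t` lies within `d(x, g x)` of the orbit point `g^⌊t⌋ x`, and `⌊·⌋ : ℝ → ℤ`
is a `(1, 1)`-quasi-isometric embedding, so `γ` is a bounded perturbation of the composite of two
quasi-isometric embeddings.
-/

open Set

def IsQuasiIsometricEmbedding {α β : Type*} [PseudoMetricSpace α] [PseudoMetricSpace β]
    (K C : ℝ) (f : α → β) : Prop :=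
  ∀ a b, dist a b / K - C ≤ dist (f a) (f b) ∧ dist (f a) (f b) ≤ K * dist a b + C

namespace IsQuasiIsometricEmbedding

variable {α β γ : Type*} [PseudoMetricSpace α] [PseudoMetricSpace β] [PseudoMetricSpace γ]

theorem floor : IsQuasiIsometricEmbedding 1 1 (Int.floor : ℝ → ℤ) := by
  intro a b
  have ha₁ := Int.floor_le a
  have ha₂ := Int.lt_floor_add_one a
  have hb₁ := Int.floor_le b
  have hb₂ := Int.lt_floor_add_one b
  rw [Int.dist_eq, Real.dist_eq, div_one, one_mul]
  constructor
  · rw [sub_le_iff_le_add, abs_le]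
    constructor <;> cases abs_cases ((⌊a⌋ : ℝ) - ⌊b⌋) <;> linarith
  · rw [abs_le]
    constructor <;> cases abs_cases (a - b) <;> linarith

theorem comp {K₁ C₁ K₂ C₂ : ℝ} {g : β → γ} {f : α → β}
    (hg : IsQuasiIsometricEmbedding K₂ C₂ g) (hf : IsQuasiIsometricEmbedding K₁ C₁ f)
    (hK₂ : 1 ≤ K₂) (hC₁ : 0 ≤ C₁) :
    IsQuasiIsometricEmbedding (K₂ * K₁) (K₂ * C₁ + C₂) (g ∘ f) := by
  intro a b
  obtain ⟨hf_lower, hf_upper⟩ := hf a b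
  obtain ⟨hg_lower, hg_upper⟩ := hg (f a) (f b)
  have hK₂_pos : 0 < K₂ := by linarith
  have hC₁_div : C₁ / K₂ ≤ K₂ * C₁ :=
    (div_le_self hC₁ hK₂).trans (le_mul_of_one_le_left hC₁ hK₂)
  constructor
  · calc dist a b / (K₂ * K₁) - (K₂ * C₁ + C₂)
        ≤ (dist a b / K₁ - C₁) / K₂ - C₂ := by
          rw [sub_div, div_div, mul_comm K₁]; linarith
      _ ≤ dist (f a) (f b) / K₂ - C₂ := by gcongr
      _ ≤ dist (g (f a)) (g (f b)) := hg_lower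
  · calc dist (g (f a)) (g (f b)) ≤ K₂ * dist (f a) (f b) + C₂ := hg_upper
      _ ≤ K₂ * (K₁ * dist a b + C₁) + C₂ := by gcongr
      _ = K₂ * K₁ * dist a b + (K₂ * C₁ + C₂) := by ring

theorem of_dist_le {K C R : ℝ} {f g : α → β} (hf : IsQuasiIsometricEmbedding K C f)
    (hgf : ∀ a, dist (g a) (f a) ≤ R) : IsQuasiIsometricEmbedding K (C + 2 * R) g := by
  intro a b
  obtain ⟨hf_lower, hf_upper⟩ := hf a b
  have h₁ := dist_triangle4 (f a) (g a) (g b) (f b)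
  have h₂ := dist_triangle4 (g a) (f a) (f b) (g b)
  rw [dist_comm (f a) (g a)] at h₁
  rw [dist_comm (f b) (g b)] at h₂
  have hga := hgf a
  have hgb := hgf b
  constructor <;> linarith

end IsQuasiIsometricEmbedding

theorem Isometry.perm_zpow {X : Type*} [PseudoEMetricSpace X] {g : Equiv.Perm X}
    (hg : Isometry g) (n : ℤ) : Isometry ⇑(g ^ n) := by
  induction n using Int.induction_on with
  | zero => exact isometry_id
  | succ k ih => rw [zpow_add_one, Equiv.Perm.coe_mul]; exact ih.comp hg
  | pred k ih =>
    rw [zpow_sub_one, Equiv.Perm.coe_mul, Equiv.Perm.coe_inv]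
    exact ih.comp (hg.right_inv g.apply_symm_apply)

section QuasiAxis

variable {X : Type*} (g : Equiv.Perm X) (γ₀ : ℝ → X)

noncomputable def quasiAxis (t : ℝ) : X := (g ^ ⌊t⌋) (γ₀ (Int.fract t))

theorem quasiAxis_add_one (t : ℝ) : quasiAxis g γ₀ (t + 1) = g (quasiAxis g γ₀ t) := by
  rw [quasiAxis, quasiAxis, Int.floor_add_one, Int.fract_add_one, add_comm, zpow_one_add,
    Equiv.Perm.mul_apply]

variable {g γ₀}

theorem quasiAxis_intCast_add (hends : γ₀ 1 = g (γ₀ 0)) (n : ℤ) {u : ℝ} (hu : u ∈ Icc 0 1) :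
    quasiAxis g γ₀ (n + u) = (g ^ n) (γ₀ u) := by
  rcases hu.2.lt_or_eq with hu₁ | rfl
  · have hfloor : ⌊(n : ℝ) + u⌋ = n := by
      rw [add_comm, Int.floor_add_intCast, Int.floor_eq_zero_iff.mpr ⟨hu.1, hu₁⟩, zero_add]
    rw [quasiAxis, hfloor, Int.fract, hfloor, add_sub_cancel_left]
  · rw [hends, quasiAxis, ← Int.cast_one, ← Int.cast_add, Int.floor_intCast, Int.fract_intCast,
      zpow_add_one, Equiv.Perm.mul_apply]

variable [PseudoMetricSpace X] {L : NNReal}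

theorem lipschitzOnWith_quasiAxis_Icc (hg : Isometry g) (hends : γ₀ 1 = g (γ₀ 0))
    (hL : LipschitzOnWith L γ₀ (Icc 0 1)) (n : ℤ) :
    LipschitzOnWith L (quasiAxis g γ₀) (Icc n (n + 1)) := by
  have hshift : ∀ s ∈ Icc (n : ℝ) (n + 1), s - n ∈ Icc (0 : ℝ) 1 := fun s hs =>
    ⟨sub_nonneg.mpr hs.1, sub_le_iff_le_add'.mpr hs.2⟩
  have hpiece : ∀ s ∈ Icc (n : ℝ) (n + 1), quasiAxis g γ₀ s = (g ^ n) (γ₀ (s - n)) :=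
    fun s hs => by rw [← quasiAxis_intCast_add hends n (hshift s hs), add_sub_cancel]
  refine LipschitzOnWith.of_dist_le_mul fun s hs t ht => ?_
  rw [hpiece s hs, hpiece t ht, (hg.perm_zpow n).dist_eq, ← dist_sub_right s t (n : ℝ)]
  exact hL.dist_le_mul _ (hshift s hs) _ (hshift t ht)

theorem dist_quasiAxis_le (hg : Isometry g) (hends : γ₀ 1 = g (γ₀ 0))
    (hL : LipschitzOnWith L γ₀ (Icc 0 1)) {s t : ℝ} (hst : s ≤ t) (hts : t ≤ s + 1) :
    dist (quasiAxis g γ₀ s) (quasiAxis g γ₀ t) ≤ L * dist s t := by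
  set n := ⌊s⌋
  have hs : s ∈ Icc (n : ℝ) (n + 1) := ⟨Int.floor_le s, (Int.lt_floor_add_one s).le⟩
  rcases le_or_gt t (n + 1) with htn | htn
  · exact (lipschitzOnWith_quasiAxis_Icc hg hends hL n).dist_le_mul s hs t ⟨hs.1.trans hst, htn⟩
  · have hleft := (lipschitzOnWith_quasiAxis_Icc hg hends hL n).dist_le_mul s hs
      (n + 1) ⟨by linarith, le_rfl⟩
    have hnext := lipschitzOnWith_quasiAxis_Icc hg hends hL (n + 1)
    push_cast at hnext
    have hright := hnext.dist_le_mul (n + 1) ⟨le_rfl, by linarith⟩ t ⟨htn.le, by linarith [hs.2]⟩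
    calc dist (quasiAxis g γ₀ s) (quasiAxis g γ₀ t)
        ≤ dist (quasiAxis g γ₀ s) (quasiAxis g γ₀ (n + 1))
          + dist (quasiAxis g γ₀ (n + 1)) (quasiAxis g γ₀ t) := dist_triangle _ _ _
      _ ≤ L * dist s (n + 1) + L * dist ((n : ℝ) + 1) t := add_le_add hleft hright
      _ = L * dist s t := by
        simp only [Real.dist_eq, abs_of_nonpos (sub_nonpos.mpr hs.2),
          abs_of_nonpos (sub_nonpos.mpr htn.le), abs_of_nonpos (sub_nonpos.mpr hst)]
        ring

theorem continuous_quasiAxis (hg : Isometry g) (hends : γ₀ 1 = g (γ₀ 0))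
    (hL : LipschitzOnWith L γ₀ (Icc 0 1)) : Continuous (quasiAxis g γ₀) := by
  refine LocallyLipschitz.continuous fun t₀ => ⟨L, Icc (t₀ - 1 / 2) (t₀ + 1 / 2),
    Icc_mem_nhds (by linarith) (by linarith), LipschitzOnWith.of_dist_le_mul fun s hs t ht => ?_⟩
  rcases le_total s t with hst | hts
  · exact dist_quasiAxis_le hg hends hL hst (by linarith [hs.1, ht.2])
  · rw [dist_comm, dist_comm s]
    exact dist_quasiAxis_le hg hends hL hts (by linarith [ht.1, hs.2])

theorem dist_quasiAxis_orbit_le (hg : Isometry g) (hL : LipschitzOnWith L γ₀ (Icc 0 1))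
    (t : ℝ) : dist (quasiAxis g γ₀ t) ((g ^ ⌊t⌋) (γ₀ 0)) ≤ L := by
  have hfract : Int.fract t ∈ Icc (0 : ℝ) 1 := ⟨Int.fract_nonneg t, (Int.fract_lt_one t).le⟩
  calc dist (quasiAxis g γ₀ t) ((g ^ ⌊t⌋) (γ₀ 0))
      = dist (γ₀ (Int.fract t)) (γ₀ 0) := (hg.perm_zpow _).dist_eq _ _
    _ ≤ L * dist (Int.fract t) 0 := hL.dist_le_mul _ hfract _ ⟨le_rfl, zero_le_one⟩
    _ ≤ L * 1 := by
      rw [Real.dist_eq, sub_zero, Int.abs_fract]; gcongr; exact hfract.2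
    _ = L := mul_one _

theorem isQuasiIsometricEmbedding_quasiAxis (hg : Isometry g)
    (hL : LipschitzOnWith L γ₀ (Icc 0 1)) {K C : ℝ} (hK : 1 ≤ K)
    (horb : IsQuasiIsometricEmbedding K C fun n : ℤ => (g ^ n) (γ₀ 0)) :
    IsQuasiIsometricEmbedding K (K + C + 2 * L) (quasiAxis g γ₀) := by
  simpa only [mul_one] using (horb.comp .floor hK zero_le_one).of_dist_le
    (dist_quasiAxis_orbit_le hg hL)

end QuasiAxis

theorem stmt_17 (X : Type) [MetricSpace X]
    (g : Equiv.Perm X) (hg : Isometry (g : X → X)) (x : X)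
    (K C : ℝ) (hK : 1 ≤ K) (hC : 0 ≤ C)
    -- n ↦ gⁿ(x) is a (K,C)-quasi-isometric embedding of ℤ into X
    (horb : ∀ m n : ℤ, |(m : ℝ) - (n : ℝ)| / K - C ≤ dist ((g ^ m) x) ((g ^ n) x) ∧
      dist ((g ^ m) x) ((g ^ n) x) ≤ K * |(m : ℝ) - (n : ℝ)| + C)
    -- γ₀ is a constant-speed geodesic from x to g(x)
    (γ₀ : ℝ → X) (h0 : γ₀ 0 = x) (h1 : γ₀ 1 = g x)
    (hgeo : ∀ s ∈ Set.Icc (0:ℝ) 1, ∀ t ∈ Set.Icc (0:ℝ) 1,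
      dist (γ₀ s) (γ₀ t) = |s - t| * dist x (g x)) :
    -- γ(t) = g^⌊t⌋(γ₀(t − ⌊t⌋)) is continuous,
    Continuous (fun t : ℝ => (g ^ ⌊t⌋) (γ₀ (t - ⌊t⌋))) ∧
    -- its image is g-invariant: g(γ(t)) = γ(t+1),
    (∀ t : ℝ, g ((g ^ ⌊t⌋) (γ₀ (t - ⌊t⌋))) = (g ^ ⌊t + 1⌋) (γ₀ ((t + 1) - ⌊t + 1⌋))) ∧
    -- and it is a (K',C')-quasi-isometric embedding of ℝ into X
    (∃ K' C' : ℝ, 1 ≤ K' ∧ 0 ≤ C' ∧ ∀ s t : ℝ,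
      |s - t| / K' - C' ≤ dist ((g ^ ⌊s⌋) (γ₀ (s - ⌊s⌋))) ((g ^ ⌊t⌋) (γ₀ (t - ⌊t⌋))) ∧
      dist ((g ^ ⌊s⌋) (γ₀ (s - ⌊s⌋))) ((g ^ ⌊t⌋) (γ₀ (t - ⌊t⌋))) ≤ K' * |s - t| + C') := by
  subst h0
  have hLip : LipschitzOnWith (nndist (γ₀ 0) (g (γ₀ 0))) γ₀ (Icc 0 1) :=
    LipschitzOnWith.of_dist_le_mul fun s hs t ht => by
      rw [coe_nndist, hgeo s hs t ht, Real.dist_eq, mul_comm]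
  have horb' : IsQuasiIsometricEmbedding K C fun n : ℤ => (g ^ n) (γ₀ 0) := fun m n => by
    simpa only [Int.dist_eq] using horb m n
  refine ⟨continuous_quasiAxis hg h1 hLip, fun t => (quasiAxis_add_one g γ₀ t).symm,
    K, K + C + 2 * dist (γ₀ 0) (g (γ₀ 0)), hK, by positivity, fun s t => ?_⟩
  have hγ := isQuasiIsometricEmbedding_quasiAxis hg hLip hK horb' s t
  rw [Real.dist_eq, coe_nndist] at hγ
  exact hγ
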